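/- With f(λ,p) = −E_{u∼p}[r₁(u)] and g(λ,p) = −E_{u∼p}[r₂(u)] + λ·KL(p‖p_data), and penalty L_γ(λ,p) = f(λ,p) + γ(g(λ,p) − g*(λ)), the gradient of L_γ*(λ) = min_p L_γ(λ,p) with respect to λ equals γ·(KL(p_γ*(λ)‖p_data) − KL(p*(λ)‖p_data)), where p_γ*(λ) minimizes L_γ(λ,·) and p*(λ) minimizes g(λ,·). -/

import Mathlib

/-!
For a bounded potential `φ`, the Gibbs density `w_l = exp (φ / l) / Z(l)` with
`Z(l) = ∫ exp (φ / l) = mgf φ (1 / l)` satisfies `log w_l = φ / l - log Z(l)`, hence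
`-∫ w_l φ + l · KL(w_l) = -l · log Z(l)`. Since `f + γ g` is `γ` times the lower-level objective
for the potential `r₁ / γ + r₂`, both optimal values are explicit:
`L_γ*(l) = γ · l · (log Z_{r₂}(l) - log Z_{r₁/γ + r₂}(l))`. Differentiating `l · log Z(l)` through the
cumulant generating function gives `log Z(l) - (1 / l) ∫ w_l φ = -KL(w_l)`.
-/

open MeasureTheory ProbabilityTheory Real

section GibbsDensity

variable {Ω : Type*} [MeasurableSpace Ω] {μ : Measure Ω} {φ : Ω → ℝ} {l : ℝ}

noncomputable def gibbsDensity (μ : Measure Ω) (φ : Ω → ℝ) (l : ℝ) (u : Ω) : ℝ :=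
  exp (φ u / l) / ∫ v, exp (φ v / l) ∂μ

lemma integrableExpSet_eq_univ_of_abs_le [IsFiniteMeasure μ] (hφ : AEStronglyMeasurable φ μ)
    {B : ℝ} (hB : ∀ u, |φ u| ≤ B) : integrableExpSet φ μ = Set.univ := by
  refine Set.eq_univ_of_forall fun t => Integrable.of_bound
    (continuous_exp.comp_aestronglyMeasurable (hφ.const_mul t)) (exp (|t| * B)) (ae_of_all _ ?_)
  intro u
  rw [norm_of_nonneg (exp_pos _).le, exp_le_exp]
  calc t * φ u ≤ |t * φ u| := le_abs_self _
    _ = |t| * |φ u| := abs_mul _ _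
    _ ≤ |t| * B := by gcongr; exact hB u

lemma mem_interior_integrableExpSet_of_abs_le [IsFiniteMeasure μ]
    (hφ : AEStronglyMeasurable φ μ) {B : ℝ} (hB : ∀ u, |φ u| ≤ B) (t : ℝ) :
    t ∈ interior (integrableExpSet φ μ) := by
  simp [integrableExpSet_eq_univ_of_abs_le hφ hB]

lemma gibbsDensity_eq_div_mgf : gibbsDensity μ φ l = fun u => exp (l⁻¹ * φ u) / mgf φ μ l⁻¹ := by
  funext u
  simp only [gibbsDensity, mgf, div_eq_inv_mul]

lemma integral_gibbsDensity_mul (ψ : Ω → ℝ) :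
    ∫ u, gibbsDensity μ φ l u * ψ u ∂μ = (∫ u, ψ u * exp (l⁻¹ * φ u) ∂μ) / mgf φ μ l⁻¹ := by
  rw [gibbsDensity_eq_div_mgf, ← integral_div]
  congr 1 with u
  ring

lemma integral_gibbsDensity [NeZero μ] (h : l⁻¹ ∈ integrableExpSet φ μ) :
    ∫ u, gibbsDensity μ φ l u ∂μ = 1 := by
  rw [gibbsDensity_eq_div_mgf, integral_div]
  exact div_self (mgf_pos_iff.2 h).ne'

lemma integrable_gibbsDensity (h : l⁻¹ ∈ integrableExpSet φ μ) :
    Integrable (gibbsDensity μ φ l) μ := by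
  rw [gibbsDensity_eq_div_mgf]
  exact h.div_const _

lemma integrable_gibbsDensity_mul (h : l⁻¹ ∈ integrableExpSet φ μ) {ψ : Ω → ℝ}
    (hψ : AEStronglyMeasurable ψ μ) {B : ℝ} (hB : ∀ u, |ψ u| ≤ B) :
    Integrable (fun u => gibbsDensity μ φ l u * ψ u) μ :=
  (integrable_gibbsDensity h).mul_bdd hψ (ae_of_all _ hB)

lemma integral_gibbsDensity_mul_log [NeZero μ] (h : l⁻¹ ∈ interior (integrableExpSet φ μ)) :
    ∫ u, gibbsDensity μ φ l u * log (gibbsDensity μ φ l u) ∂μ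
      = l⁻¹ * (∫ u, gibbsDensity μ φ l u * φ u ∂μ) - cgf φ μ l⁻¹ := by
  have h_int : l⁻¹ ∈ integrableExpSet φ μ := interior_subset h
  have h_log : ∀ u, log (gibbsDensity μ φ l u) = l⁻¹ * φ u - cgf φ μ l⁻¹ := fun u => by
    rw [gibbsDensity_eq_div_mgf, log_div (exp_pos _).ne' (mgf_pos_iff.2 h_int).ne', log_exp, cgf]
  have h_int_mul : Integrable (fun u => gibbsDensity μ φ l u * φ u) μ := by
    rw [gibbsDensity_eq_div_mgf]
    simpa [mul_comm, mul_div_assoc] using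
      (integrable_pow_mul_exp_of_mem_interior_integrableExpSet h 1).div_const (mgf φ μ l⁻¹)
  calc ∫ u, gibbsDensity μ φ l u * log (gibbsDensity μ φ l u) ∂μ
      = ∫ u, (l⁻¹ * (gibbsDensity μ φ l u * φ u) - cgf φ μ l⁻¹ * gibbsDensity μ φ l u) ∂μ := by
        congr with u
        rw [h_log]
        ring
    _ = l⁻¹ * (∫ u, gibbsDensity μ φ l u * φ u ∂μ) - cgf φ μ l⁻¹ := by
        rw [integral_sub (h_int_mul.const_mul _) ((integrable_gibbsDensity h_int).const_mul _),
          integral_const_mul, integral_const_mul, integral_gibbsDensity h_int, mul_one]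

lemma freeEnergy_gibbsDensity [NeZero μ] (hl : l ≠ 0) (h : l⁻¹ ∈ interior (integrableExpSet φ μ)) :
    -(∫ u, gibbsDensity μ φ l u * φ u ∂μ)
      + l * ∫ u, gibbsDensity μ φ l u * log (gibbsDensity μ φ l u) ∂μ = -(l * cgf φ μ l⁻¹) := by
  rw [integral_gibbsDensity_mul_log h, mul_sub, ← mul_assoc, mul_inv_cancel₀ hl, one_mul]
  ring

lemma hasDerivAt_mul_cgf_inv [NeZero μ] (hl : l ≠ 0) (h : l⁻¹ ∈ interior (integrableExpSet φ μ)) :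
    HasDerivAt (fun t => t * cgf φ μ t⁻¹)
      (-∫ u, gibbsDensity μ φ l u * log (gibbsDensity μ φ l u) ∂μ) l := by
  have h_cgf : HasDerivAt (cgf φ μ) (μ[fun u => φ u * exp (l⁻¹ * φ u)] / mgf φ μ l⁻¹) l⁻¹ := by
    rw [← deriv_cgf h]
    exact (analyticAt_cgf h).differentiableAt.hasDerivAt
  refine ((hasDerivAt_id l).mul (h_cgf.comp l (hasDerivAt_inv hl))).congr_deriv ?_
  rw [integral_gibbsDensity_mul_log h, integral_gibbsDensity_mul]
  simp only [Function.comp_apply, id_eq]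
  field_simp
  ring

end GibbsDensity

/-- With `f(λ,p) = −E_{u∼p}[r₁]`, `g(λ,p) = −E_{u∼p}[r₂] + λ·KL(p‖pdata)`
and penalty `L_γ(λ,p) = f(λ,p) + γ(g(λ,p) − g*(λ))`, where `g*(λ) = min_p g(λ,p)` is attained
at the tilted density `p*(λ) ∝ pdata·exp(r₂/λ)` and `L_γ(λ,·)` is minimized at
`p_γ*(λ) ∝ pdata·exp((r₁/γ + r₂)/λ)`, the derivative of `L_γ*(λ) = min_p L_γ(λ,p)`
with respect to `λ` equals `γ·(KL(p_γ*(λ)‖pdata) − KL(p*(λ)‖pdata))`. -/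
theorem deriv_penalty_value_eq_kl_difference {Ω : Type*} [MeasurableSpace Ω]
    (pdata : Measure Ω) [IsProbabilityMeasure pdata]
    (r₁ r₂ : Ω → ℝ) (hr₁ : Measurable r₁) (hr₂ : Measurable r₂)
    (C : ℝ) (hrC₁ : ∀ u, |r₁ u| ≤ C) (hrC₂ : ∀ u, |r₂ u| ≤ C)
    (γ : ℝ) (hγ : 0 < γ) (lam : ℝ) (hlam : 0 < lam)
    -- the tilted minimizer `p*(λ)` of the lower level `g(λ,·)`
    (wstar : ℝ → Ω → ℝ)
    (hwstar : ∀ l u, wstar l u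
      = Real.exp (r₂ u / l) / ∫ v, Real.exp (r₂ v / l) ∂pdata)
    -- the tilted minimizer `p_γ*(λ)` of the penalty `L_γ(λ,·)`
    (wγ : ℝ → Ω → ℝ)
    (hwγ : ∀ l u, wγ l u
      = Real.exp ((r₁ u / γ + r₂ u) / l) / ∫ v, Real.exp ((r₁ v / γ + r₂ v) / l) ∂pdata)
    -- KL divergence to `pdata` of the density `w · pdata`
    (KL : (Ω → ℝ) → ℝ) (hKL : ∀ w, KL w = ∫ u, w u * Real.log (w u) ∂pdata)
    -- the lower-level optimal value `g*(λ)`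
    (gstar : ℝ → ℝ)
    (hgstar : ∀ l, gstar l = -(∫ u, wstar l u * r₂ u ∂pdata) + l * KL (wstar l))
    -- the penalty optimal value `L_γ*(λ) = min_p L_γ(λ,p)`
    (Lstar : ℝ → ℝ)
    (hLstar : ∀ l, Lstar l
      = -(∫ u, wγ l u * r₁ u ∂pdata)
        + γ * ((-(∫ u, wγ l u * r₂ u ∂pdata) + l * KL (wγ l)) - gstar l)) :
    HasDerivAt Lstar (γ * (KL (wγ lam) - KL (wstar lam))) lam := by
  set φ : Ω → ℝ := fun u => r₁ u / γ + r₂ u with hφ_def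
  have hφ_bound : ∀ u, |φ u| ≤ C / γ + C := fun u =>
    (abs_add_le _ _).trans <| add_le_add
      (by rw [abs_div, abs_of_pos hγ]; exact div_le_div_of_nonneg_right (hrC₁ u) hγ.le) (hrC₂ u)
  have h₂ : ∀ t, t ∈ interior (integrableExpSet r₂ pdata) :=
    mem_interior_integrableExpSet_of_abs_le hr₂.aestronglyMeasurable hrC₂
  have hφ : ∀ t, t ∈ interior (integrableExpSet φ pdata) :=
    mem_interior_integrableExpSet_of_abs_le ((hr₁.div_const γ).add hr₂).aestronglyMeasurable
      hφ_bound
  obtain rfl : wstar = gibbsDensity pdata r₂ := funext fun l => funext (hwstar l)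
  obtain rfl : wγ = gibbsDensity pdata φ := funext fun l => funext (hwγ l)
  obtain rfl : KL = fun w => ∫ u, w u * log (w u) ∂pdata := funext hKL
  have hL : ∀ l ≠ 0, Lstar l = γ * (l * cgf r₂ pdata l⁻¹) - γ * (l * cgf φ pdata l⁻¹) := by
    intro l hl
    have h_split : γ * ∫ u, gibbsDensity pdata φ l u * φ u ∂pdata
        = (∫ u, gibbsDensity pdata φ l u * r₁ u ∂pdata)
          + γ * ∫ u, gibbsDensity pdata φ l u * r₂ u ∂pdata := by
      have hint := fun {ψ : Ω → ℝ} (hψ : Measurable ψ) (hB : ∀ u, |ψ u| ≤ C) =>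
        integrable_gibbsDensity_mul (interior_subset (hφ l⁻¹)) hψ.aestronglyMeasurable hB
      rw [← integral_const_mul, ← integral_const_mul,
        ← integral_add (hint hr₁ hrC₁) ((hint hr₂ hrC₂).const_mul γ)]
      congr with u
      simp only [hφ_def]
      field_simp
    rw [hLstar, hgstar, freeEnergy_gibbsDensity hl (h₂ l⁻¹)]
    linear_combination γ * freeEnergy_gibbsDensity hl (hφ l⁻¹) + h_split
  have h_deriv := ((hasDerivAt_mul_cgf_inv hlam.ne' (h₂ lam⁻¹)).const_mul γ).sub
    ((hasDerivAt_mul_cgf_inv hlam.ne' (hφ lam⁻¹)).const_mul γ)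
  refine (h_deriv.congr_deriv (by ring)).congr_of_eventuallyEq ?_
  filter_upwards [eventually_ne_nhds hlam.ne'] with l hl using hL l hl
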